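/- Let s be an odd integer with s ≥ 3. Then liminf_{n→∞} ex(n, P^{(3)}_s)/C(n,3) ≥ 1 − 4/(s−1)^2, where C(n,3) is the binomial coefficient. -/

import Mathlib

open Finset
open scoped Classical

/-- Edge set of the natural tight path `P^{(r)}_s` on vertex set `[s] = {1,…,s}`:
all intervals of `r` consecutive integers. -/
def pathEdges (r s : ℕ) : Finset (Finset ℕ) :=
  (Finset.Icc 1 (s - r + 1)).image (fun i => Finset.Icc i (i + r - 1))

/-- Edge set of the loose path `LP^{(r)}_s`: only the first and last edges. -/
def loosePathEdges (r s : ℕ) : Finset (Finset ℕ) :=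
  {Finset.Icc 1 r, Finset.Icc (s - r + 1) s}

/-- `C` is the edge set of a copy in `K^{(r)}_n` of the ordered hypergraph with
vertex set `[s]` and edge set `E`, i.e. the image of `E` under a strictly
increasing map `[s] → [n]`. -/
def IsCopy (n s : ℕ) (E : Finset (Finset ℕ)) (C : Finset (Finset ℕ)) : Prop :=
  ∃ f : ℕ → ℕ, StrictMonoOn f ↑(Finset.Icc 1 s) ∧
    (∀ v ∈ Finset.Icc 1 s, f v ∈ Finset.Icc 1 n) ∧
    C = E.image (fun e => e.image f)

/-- A transversal: a set `T` of `r`-element subsets of `[n]` meeting every copy. -/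
def IsTransversal (n r s : ℕ) (E : Finset (Finset ℕ)) (T : Finset (Finset ℕ)) : Prop :=
  T ⊆ (Finset.Icc 1 n).powersetCard r ∧
  ∀ C : Finset (Finset ℕ), IsCopy n s E C → ∃ e ∈ C, e ∈ T

/-- The transversal number `τ(n,H)`. -/
noncomputable def tau (n r s : ℕ) (E : Finset (Finset ℕ)) : ℕ :=
  sInf {m | ∃ T : Finset (Finset ℕ), IsTransversal n r s E T ∧ T.card = m}

/-- A packing: an edge-disjoint family of copies. -/
def IsPacking (n s : ℕ) (E : Finset (Finset ℕ)) (P : Finset (Finset (Finset ℕ))) : Prop :=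
  (∀ C ∈ P, IsCopy n s E C) ∧
  ∀ C ∈ P, ∀ C' ∈ P, C ≠ C' → Disjoint C C'

/-- The packing number `ν(n,H)`. -/
noncomputable def nu (n s : ℕ) (E : Finset (Finset ℕ)) : ℕ :=
  sSup {m | ∃ P : Finset (Finset (Finset ℕ)), IsPacking n s E P ∧ P.card = m}

/-- The ordered Turán number: maximum number of edges of a subgraph of
`K^{(r)}_n` containing no copy of the hypergraph with edge set `E`. -/
noncomputable def exNum (n r s : ℕ) (E : Finset (Finset ℕ)) : ℕ :=
  sSup {m | ∃ G ⊆ (Finset.Icc 1 n).powersetCard r,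
    (∀ C : Finset (Finset ℕ), IsCopy n s E C → ¬ C ⊆ G) ∧ G.card = m}

/-- `S ⊆ [n]` is `m`-left-biased. -/
def LeftBiased (n m : ℕ) (S : Finset ℕ) : Prop :=
  ∃ u ≤ n / 2, (S ∩ Finset.Icc 1 u).card = m ∧ S ∩ Finset.Icc (n + 1 - u) n = ∅

/-- `h(n,t,m)`: the number of `m`-left-biased `t`-element subsets of `[n]`. -/
noncomputable def hcount (n t m : ℕ) : ℕ :=
  (((Finset.Icc 1 n).powersetCard t).filter (LeftBiased n m)).card

/-- A fractional transversal. -/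
def IsFracTransversal (n r s : ℕ) (E : Finset (Finset ℕ)) (w : Finset ℕ → ℝ) : Prop :=
  (∀ e ∈ (Finset.Icc 1 n).powersetCard r, 0 ≤ w e) ∧
  ∀ C : Finset (Finset ℕ), IsCopy n s E C → 1 ≤ ∑ e ∈ C, w e

/-- The fractional transversal number `τ*(n,H)`. -/
noncomputable def tauStar (n r s : ℕ) (E : Finset (Finset ℕ)) : ℝ :=
  sInf {x : ℝ | ∃ w : Finset ℕ → ℝ, IsFracTransversal n r s E w ∧
    x = ∑ e ∈ (Finset.Icc 1 n).powersetCard r, w e}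

/-- A `k`-edge-labeling of the ordered complete graph on `[n]`. -/
def IsLabeling (n k : ℕ) (φ : ℕ → ℕ → ℕ) : Prop :=
  ∀ u v : ℕ, u ∈ Finset.Icc 1 n → v ∈ Finset.Icc 1 n → u < v → φ u v ∈ Finset.Icc 1 k

/-- The number of good triples `u < v < w` in `[n]` (those with `φ(uv) < φ(vw)`). -/
def goodCount (n : ℕ) (φ : ℕ → ℕ → ℕ) : ℕ :=
  (((Finset.Icc 1 n) ×ˢ (Finset.Icc 1 n) ×ˢ (Finset.Icc 1 n)).filter
    (fun p => p.1 < p.2.1 ∧ p.2.1 < p.2.2 ∧ φ p.1 p.2.1 < φ p.2.1 p.2.2)).card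

/-- The number of bad triples `u < v < w` in `[n]` (those with `φ(uv) ≥ φ(vw)`). -/
def badCount (n : ℕ) (φ : ℕ → ℕ → ℕ) : ℕ :=
  (((Finset.Icc 1 n) ×ˢ (Finset.Icc 1 n) ×ˢ (Finset.Icc 1 n)).filter
    (fun p => p.1 < p.2.1 ∧ p.2.1 < p.2.2 ∧ ¬ φ p.1 p.2.1 < φ p.2.1 p.2.2)).card

/-- `f(n,k)`: the maximum number of good triples over all `k`-edge-labelings of `[n]`. -/
noncomputable def fmax (n k : ℕ) : ℕ :=
  sSup {m | ∃ φ : ℕ → ℕ → ℕ, IsLabeling n k φ ∧ goodCount n φ = m}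

/-- A labeling is monotone if `φ(uv) ≤ φ(vw)` whenever `u < v < w` in `[n]`. -/
def IsMonotone (n : ℕ) (φ : ℕ → ℕ → ℕ) : Prop :=
  ∀ u v w : ℕ, u ∈ Finset.Icc 1 n → v ∈ Finset.Icc 1 n → w ∈ Finset.Icc 1 n →
    u < v → v < w → φ u v ≤ φ v w

/-- `Φ_L(v) = max{φ(uv) : u < v}`, with `Φ_L(1) = 0`. -/
def PhiL (φ : ℕ → ℕ → ℕ) (v : ℕ) : ℕ := (Finset.Ico 1 v).sup (fun u => φ u v)

/-- `Φ_R(v) = min{φ(vw) : v < w ≤ n}`, with `Φ_R(n) = k+1`. -/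
noncomputable def PhiR (n k : ℕ) (φ : ℕ → ℕ → ℕ) (v : ℕ) : ℕ :=
  if v = n then k + 1 else sInf {m | ∃ w ∈ Finset.Ioc v n, φ v w = m}

/-- `X_i = {v ∈ [n] : Φ_L(v) = i}`. -/
def XL (n : ℕ) (φ : ℕ → ℕ → ℕ) (i : ℕ) : Finset ℕ :=
  (Finset.Icc 1 n).filter (fun v => PhiL φ v = i)

/-- `X̂_i = {v ∈ [n] : Φ_R(v) = i}`. -/
noncomputable def XR (n k : ℕ) (φ : ℕ → ℕ → ℕ) (i : ℕ) : Finset ℕ :=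
  (Finset.Icc 1 n).filter (fun v => PhiR n k φ v = i)


/-! Cut `[n]` into `k` consecutive blocks of `q = ⌊n/k⌋ + 1` vertices and keep every triple
that meets at least two blocks. In a copy `v₁ < ⋯ < v_{2k+1}` of the tight path, `vᵢ, vᵢ₊₁, vᵢ₊₂`
form an edge, so `vᵢ₊₂` lies in a later block than `vᵢ`; along `v₁, v₃, …, v_{2k+1}` the block
index would increase `k` times, which `k` blocks do not allow. Only the at most `k·C(q,3)` triples
inside a block are lost, about a `1/k² = 4/(s-1)²` fraction of all triples. -/

open Filter Topology

theorem exNum_le_choose (n r s : ℕ) (E : Finset (Finset ℕ)) : exNum n r s E ≤ n.choose r :=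
  csSup_le' fun _ ⟨G, hG, _, hm⟩ => hm ▸ by simpa using card_le_card hG

theorem card_le_exNum {n r s : ℕ} {E G : Finset (Finset ℕ)}
    (hG : G ⊆ (Icc 1 n).powersetCard r) (hfree : ∀ C, IsCopy n s E C → ¬ C ⊆ G) :
    G.card ≤ exNum n r s E :=
  le_csSup ⟨n.choose r, fun _ ⟨_, hG', _, hm⟩ => hm ▸ by simpa using card_le_card hG'⟩
    ⟨G, hG, hfree, rfl⟩

theorem Icc_mem_pathEdges_three {s i : ℕ} (hi : 1 ≤ i) (his : i + 2 ≤ s) :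
    Icc i (i + 2) ∈ pathEdges 3 s :=
  mem_image.mpr ⟨i, mem_Icc.mpr ⟨hi, by omega⟩, rfl⟩

/-- Vertex `v ≥ 1` lies in the block `{jq+1, …, jq+q}` with `j = blockIndex q v`. -/
def blockIndex (q v : ℕ) : ℕ := (v - 1) / q

theorem blockIndex_mono (q : ℕ) : Monotone (blockIndex q) :=
  fun _ _ h => Nat.div_le_div_right (Nat.sub_le_sub_right h 1)

theorem blockIndex_lt {n k q v : ℕ} (hn : n ≤ k * q) (hv : v ∈ Icc 1 n) :
    blockIndex q v < k := by
  rw [mem_Icc] at hv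
  have hq : 0 < q := Nat.pos_of_ne_zero fun h => by simp [h] at hn; omega
  exact (Nat.div_lt_iff_lt_mul hq).mpr (by omega)

theorem mem_Icc_blockIndex {q v : ℕ} (hq : 0 < q) (hv : 1 ≤ v) :
    v ∈ Icc (blockIndex q v * q + 1) (blockIndex q v * q + q) := by
  have h₁ : blockIndex q v * q ≤ v - 1 := Nat.div_mul_le_self _ _
  have h₂ : v - 1 < blockIndex q v * q + q := by
    have := Nat.lt_mul_div_succ (v - 1) hq
    rwa [mul_add, mul_one, mul_comm] at this
  rw [mem_Icc]
  omega

def IsCrossing (q : ℕ) (e : Finset ℕ) : Prop :=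
  ∃ a ∈ e, ∃ b ∈ e, blockIndex q a ≠ blockIndex q b

noncomputable def crossingTriples (n q : ℕ) : Finset (Finset ℕ) :=
  ((Icc 1 n).powersetCard 3).filter (IsCrossing q)

theorem choose_three_le_card_crossingTriples_add {n k q : ℕ} (hq : 0 < q) (hn : n ≤ k * q) :
    n.choose 3 ≤ (crossingTriples n q).card + k * q.choose 3 := by
  set A := (Icc 1 n).powersetCard 3
  have hinside : A.filter (¬ IsCrossing q ·) ⊆
      (range k).biUnion fun j => (Icc (j * q + 1) (j * q + q)).powersetCard 3 := by
    intro e he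
    simp only [IsCrossing, not_exists, not_and, not_not, mem_filter, A, mem_powersetCard] at he
    obtain ⟨⟨he_sub, he_card⟩, hsame⟩ := he
    obtain ⟨a, ha⟩ := card_pos.mp (by omega : 0 < e.card)
    refine mem_biUnion.mpr ⟨blockIndex q a, mem_range.mpr (blockIndex_lt hn (he_sub ha)),
      mem_powersetCard.mpr ⟨fun b hb => ?_, he_card⟩⟩
    rw [← hsame b hb a ha]
    exact mem_Icc_blockIndex hq (mem_Icc.mp (he_sub hb)).1
  have hcard_inside : (A.filter (¬ IsCrossing q ·)).card ≤ k * q.choose 3 :=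
    calc _ ≤ _ := card_le_card hinside
      _ ≤ ∑ j ∈ range k, ((Icc (j * q + 1) (j * q + q)).powersetCard 3).card := card_biUnion_le
      _ = k * q.choose 3 := by
        simp [card_powersetCard, show ∀ j, j * q + q + 1 - (j * q + 1) = q by omega]
  have hA : A.card = n.choose 3 := by simp [A]
  have := card_filter_add_card_filter_not (s := A) (p := IsCrossing q)
  have : (crossingTriples n q).card = (A.filter (IsCrossing q)).card := rfl
  omega

theorem blockIndex_lt_add_two {s q : ℕ} {f : ℕ → ℕ} (hf : StrictMonoOn f (Icc 1 s))
    (hcross : ∀ e ∈ pathEdges 3 s, IsCrossing q (e.image f)) {i : ℕ} (hi : 1 ≤ i)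
    (his : i + 2 ≤ s) : blockIndex q (f i) < blockIndex q (f (i + 2)) := by
  have hg : MonotoneOn (blockIndex q ∘ f) (Icc 1 s) :=
    (blockIndex_mono q).comp_monotoneOn hf.monotoneOn
  have hbetween : ∀ x ∈ Icc i (i + 2),
      blockIndex q (f i) ≤ blockIndex q (f x) ∧ blockIndex q (f x) ≤ blockIndex q (f (i + 2)) := by
    intro x hx
    simp only [mem_Icc] at hx
    exact ⟨hg (by simp; omega) (by simp; omega) hx.1, hg (by simp; omega) (by simp; omega) hx.2⟩
  obtain ⟨_, hfa, _, hfb, hab⟩ := hcross _ (Icc_mem_pathEdges_three hi his)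
  obtain ⟨a, ha, rfl⟩ := mem_image.mp hfa
  obtain ⟨b, hb, rfl⟩ := mem_image.mp hfb
  have := hbetween a ha
  have := hbetween b hb
  omega

theorem not_subset_crossingTriples {n k q : ℕ} (hn : n ≤ k * q) {C : Finset (Finset ℕ)}
    (hC : IsCopy n (2 * k + 1) (pathEdges 3 (2 * k + 1)) C) : ¬ C ⊆ crossingTriples n q := by
  obtain ⟨f, hf, hf_range, rfl⟩ := hC
  intro hsub
  have hcross : ∀ e ∈ pathEdges 3 (2 * k + 1), IsCrossing q (e.image f) :=
    fun e he => (mem_filter.mp (hsub (mem_image_of_mem _ he))).2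
  have hclimb : ∀ j ≤ k, blockIndex q (f 1) + j ≤ blockIndex q (f (2 * j + 1)) := by
    intro j
    induction j with
    | zero => simp
    | succ j ih =>
      intro hj
      have := blockIndex_lt_add_two hf hcross (i := 2 * j + 1) (by omega) (by omega)
      rw [show 2 * j + 1 + 2 = 2 * (j + 1) + 1 by ring] at this
      have := ih (by omega)
      omega
  have := hclimb k le_rfl
  have := blockIndex_lt hn (hf_range (2 * k + 1) (by simp))
  omega

theorem choose_three_le_exNum_add {k : ℕ} (hk : 0 < k) (n : ℕ) :
    n.choose 3 ≤ exNum n 3 (2 * k + 1) (pathEdges 3 (2 * k + 1)) + k * (n / k + 1).choose 3 := by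
  have hn : n ≤ k * (n / k + 1) := by
    have := Nat.lt_mul_div_succ n hk
    omega
  have := choose_three_le_card_crossingTriples_add (Nat.add_one_pos (n / k)) hn
  have := card_le_exNum (G := crossingTriples n (n / k + 1)) (filter_subset _ _)
    fun _ hC => not_subset_crossingTriples hn hC
  omega

theorem one_sub_le_exNum_div_choose {k n : ℕ} (hk : 0 < k) (hn : 3 ≤ n) :
    1 - (((n : ℝ) + k) / (n - 2)) ^ 3 / (k : ℝ) ^ 2 ≤
      (exNum n 3 (2 * k + 1) (pathEdges 3 (2 * k + 1)) : ℝ) / n.choose 3 := by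
  set q := n / k + 1
  have hkR : (0 : ℝ) < k := by exact_mod_cast hk
  have hn2 : (0 : ℝ) < n - 2 := by
    have : (3 : ℝ) ≤ n := by exact_mod_cast hn
    linarith
  have hlower : ((n : ℝ) - 2) ^ 3 / 6 ≤ n.choose 3 := by
    have := Nat.pow_le_choose (α := ℝ) 3 n
    rwa [Nat.cast_sub (by omega), Nat.cast_add_one, Nat.cast_ofNat, Nat.factorial_succ,
      show (n : ℝ) + 1 - 3 = n - 2 by ring] at this
  have hupper : (q.choose 3 : ℝ) ≤ (((n : ℝ) + k) / k) ^ 3 / 6 := by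
    have hq : (q : ℝ) ≤ ((n : ℝ) + k) / k := by
      rw [add_div, div_self hkR.ne']
      simpa [q] using Nat.cast_div_le (α := ℝ) (m := n) (n := k)
    calc (q.choose 3 : ℝ) ≤ (q : ℝ) ^ 3 / 6 := by
          simpa [Nat.factorial] using Nat.choose_le_pow_div (α := ℝ) 3 q
      _ ≤ _ := by gcongr
  have hchoose : (n.choose 3 : ℝ) ≤
      exNum n 3 (2 * k + 1) (pathEdges 3 (2 * k + 1)) + k * q.choose 3 := by
    exact_mod_cast choose_three_le_exNum_add hk n
  have hc : (0 : ℝ) < n.choose 3 := lt_of_lt_of_le (by positivity) hlower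
  calc 1 - (((n : ℝ) + k) / (n - 2)) ^ 3 / (k : ℝ) ^ 2
      = 1 - k * ((((n : ℝ) + k) / k) ^ 3 / 6) / (((n : ℝ) - 2) ^ 3 / 6) := by
        field_simp
    _ ≤ 1 - k * (q.choose 3 : ℝ) / n.choose 3 := by gcongr
    _ ≤ _ := by
        rw [sub_le_iff_le_add, ← add_div, le_div_iff₀ hc]
        linarith

theorem tendsto_natCast_add_div_natCast_sub (a b : ℝ) :
    Tendsto (fun n : ℕ => ((n : ℝ) + a) / (n - b)) atTop (𝓝 1) := by
  have h : Tendsto (fun n : ℕ => (1 + a / n) / (1 - b / n)) atTop (𝓝 ((1 + 0) / (1 - 0))) :=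
    ((tendsto_const_div_atTop_nhds_zero_nat a).const_add 1).div
      ((tendsto_const_div_atTop_nhds_zero_nat b).const_sub 1) (by norm_num)
  rw [show ((1 : ℝ) + 0) / (1 - 0) = 1 by norm_num] at h
  refine h.congr' ((eventually_ne_atTop 0).mono fun n hn => ?_)
  have : (n : ℝ) ≠ 0 := by exact_mod_cast hn
  field_simp

/-- For odd `s ≥ 3`,
`liminf_{n→∞} ex(n, P^{(3)}_s)/C(n,3) ≥ 1 - 4/(s-1)^2`. -/
theorem stmt13 (s : ℕ) (hs : 3 ≤ s) (hodd : Odd s) :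
    (1 - 4 / ((s : ℝ) - 1) ^ 2) ≤
      Filter.atTop.liminf
        (fun n : ℕ => (exNum n 3 s (pathEdges 3 s) : ℝ) / (n.choose 3 : ℝ)) := by
  obtain ⟨k, rfl⟩ := hodd
  have hk : 0 < k := by omega
  have hlim : Tendsto (fun n : ℕ => 1 - (((n : ℝ) + k) / (n - 2)) ^ 3 / (k : ℝ) ^ 2) atTop
      (𝓝 (1 - 4 / (((2 * k + 1 : ℕ) : ℝ) - 1) ^ 2)) := by
    convert (((tendsto_natCast_add_div_natCast_sub k 2).pow 3).div_const _).const_sub 1 using 2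
    push_cast
    ring
  rw [← hlim.liminf_eq]
  refine liminf_le_liminf ((eventually_ge_atTop 3).mono fun n hn =>
    one_sub_le_exNum_div_choose hk hn) hlim.isBoundedUnder_ge ?_
  exact isCoboundedUnder_ge_of_le _ fun n =>
    div_le_one_of_le₀ (by exact_mod_cast exNum_le_choose ..) (Nat.cast_nonneg _)
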